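/- arXiv:2602.08985 — 5 statements merged into one kernel-verified Lean document; each statement's English description precedes it below -/
import Mathlib

section
/- Let L ≥ 1 be an integer and let 0 < δ < 1/2. Define F : ℝ → ℂ by F(θ) = e^{-iπLθ} · T_L(cos(πθ)/cos(πδ)) / T_L(1/cos(πδ)). Then F(0) = 1, |F(θ)| ≤ 1 for all real θ, and |F(-θ)| = |F(θ)| for all real θ. -/
/-!
On `[-1, 1]` the Chebyshev polynomial `T_L` is bounded by `1`, and on `[1, ∞)` it is
`cosh (L · arcosh x)`, hence increasing and at least `1`; by parity the same holds for `|T_L|` in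
`|x|`. So `|T_L x| ≤ T_L y` whenever `1 ≤ y` and `|x| ≤ y`, which with `y = 1 / cos (πδ)` bounds the
real factor of `F` by `1`. The phase has modulus `1`, and `cos` is even.
-/

open Real Polynomial Polynomial.Chebyshev

namespace Polynomial.Chebyshev

theorem eval_T_real_le_eval_T_real (n : ℤ) {x y : ℝ} (hx : 1 ≤ x) (hxy : x ≤ y) :
    (T ℝ n).eval x ≤ (T ℝ n).eval y := by
  have hy : 1 ≤ y := hx.trans hxy
  rw [← cosh_arcosh hx, ← cosh_arcosh hy, T_real_cosh, T_real_cosh, cosh_le_cosh, abs_mul,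
    abs_mul, abs_of_nonneg (arcosh_nonneg hx), abs_of_nonneg (arcosh_nonneg hy)]
  gcongr
  exact (arcosh_le_arcosh (by linarith) (by linarith)).2 hxy

theorem abs_eval_T_real_abs (n : ℤ) (x : ℝ) : |(T ℝ n).eval (|x|)| = |(T ℝ n).eval x| := by
  rcases abs_choice x with h | h <;> simp [h, T_eval_neg, abs_mul]

theorem abs_eval_T_real_le_eval_T_real (n : ℤ) {x y : ℝ} (hy : 1 ≤ y) (hxy : |x| ≤ y) :
    |(T ℝ n).eval x| ≤ (T ℝ n).eval y := by
  rcases le_total |x| 1 with hx | hx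
  · exact (abs_eval_T_real_le_one n hx).trans (one_le_eval_T_real n hy)
  · rw [← abs_eval_T_real_abs, abs_of_nonneg (zero_le_one.trans (one_le_eval_T_real n hx))]
    exact eval_T_real_le_eval_T_real n hx hxy

end Polynomial.Chebyshev

theorem stmt_2_general (L : ℕ) (δ : ℝ) (hδ0 : 0 < δ) (hδ : δ < 1 / 2)
    (F : ℝ → ℂ)
    (hF : ∀ θ : ℝ, F θ = Complex.exp (-Complex.I * π * L * θ) *
      ((((Polynomial.Chebyshev.T ℝ L).eval (Real.cos (π * θ) / Real.cos (π * δ))) /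
        ((Polynomial.Chebyshev.T ℝ L).eval (1 / Real.cos (π * δ))) : ℝ) : ℂ)) :
    F 0 = 1 ∧ (∀ θ : ℝ, ‖F θ‖ ≤ 1) ∧
      (∀ θ : ℝ, ‖F (-θ)‖ = ‖F θ‖) := by
  set c := Real.cos (π * δ)
  have hc : 0 < c := cos_pos_of_mem_Ioo ⟨by nlinarith [pi_pos], by nlinarith [pi_pos]⟩
  have hc1 : 1 ≤ 1 / c := one_le_one_div hc (cos_le_one _)
  have hD : 0 < (T ℝ L).eval (1 / c) := zero_lt_one.trans_le (one_le_eval_T_real L hc1)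
  have norm_F (θ : ℝ) :
      ‖F θ‖ = |(T ℝ L).eval (Real.cos (π * θ) / c)| / (T ℝ L).eval (1 / c) := by
    have phase : ‖Complex.exp (-Complex.I * π * L * θ)‖ = 1 := by simp [Complex.norm_exp]
    rw [hF, norm_mul, phase, one_mul, Complex.norm_real, norm_div, Real.norm_eq_abs,
      Real.norm_of_nonneg hD.le]
  refine ⟨?_, fun θ ↦ ?_, fun θ ↦ ?_⟩
  · rw [hF, Complex.ofReal_zero, mul_zero, Complex.exp_zero, one_mul, mul_zero, cos_zero,
      div_self hD.ne', Complex.ofReal_one]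
  · rw [norm_F, div_le_one hD]
    refine abs_eval_T_real_le_eval_T_real L hc1 ?_
    rw [abs_div, abs_of_pos hc]
    gcongr
    exact abs_cos_le_one _
  · rw [norm_F, norm_F, mul_neg, cos_neg]

theorem stmt_2 (L : ℕ) (hL : 1 ≤ L) (δ : ℝ) (hδ0 : 0 < δ) (hδ : δ < 1 / 2)
    (F : ℝ → ℂ)
    (hF : ∀ θ : ℝ, F θ = Complex.exp (-Complex.I * π * L * θ) *
      ((((Polynomial.Chebyshev.T ℝ L).eval (Real.cos (π * θ) / Real.cos (π * δ))) /
        ((Polynomial.Chebyshev.T ℝ L).eval (1 / Real.cos (π * δ))) : ℝ) : ℂ)) :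
    F 0 = 1 ∧ (∀ θ : ℝ, ‖F θ‖ ≤ 1) ∧
      (∀ θ : ℝ, ‖F (-θ)‖ = ‖F θ‖) :=
  stmt_2_general L δ hδ0 hδ F hF
end

section
/- Let L ≥ 1 be an integer and let 0 < δ < 1/2. Define F : ℝ → ℂ by F(θ) = e^{-iπLθ} · T_L(cos(πθ)/cos(πδ)) / T_L(1/cos(πδ)). Then for every real θ with δ ≤ θ ≤ 1 - δ one has |F(θ)| ≤ 2 e^{-πLδ}. -/
/-!
Write `c = cos (πδ)` and `1 / c = cosh t` with `t ≥ 0`. On `δ ≤ θ ≤ 1 - δ` the argument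
`cos (πθ) / c` lies in `[-1, 1]`, where `|T_L| ≤ 1`, while `T_L (cosh t) = cosh (L t) ≥ e^{L t} / 2`.
So `|F θ| ≤ 2 e^{-L t}`, and it remains to see `t ≥ πδ`, i.e. `cos x · cosh x ≤ 1` on
`[0, π/2]`; this follows from `cosh x ≤ e^{x²/2}` and `cos x ≤ e^{-x²/2}`, the latter because
`cos x · e^{x²/2}` has derivative `(x cos x - sin x) e^{x²/2} ≤ 0` (as `x ≤ tan x`).
-/

open Real Polynomial.Chebyshev

namespace Real

lemma cos_mul_exp_half_sq_le_one {x : ℝ} (hx₀ : 0 ≤ x) (hx : x ≤ π / 2) :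
    cos x * exp (x ^ 2 / 2) ≤ 1 := by
  have hderiv (y : ℝ) : HasDerivAt (fun x ↦ cos x * exp (x ^ 2 / 2))
      ((y * cos y - sin y) * exp (y ^ 2 / 2)) y :=
    ((hasDerivAt_cos y).fun_mul ((hasDerivAt_pow 2 y).div_const 2).exp).congr_deriv (by
      push_cast; ring)
  have hanti : AntitoneOn (fun x ↦ cos x * exp (x ^ 2 / 2)) (Set.Icc 0 (π / 2)) := by
    refine antitoneOn_of_deriv_nonpos (convex_Icc _ _) (by fun_prop)
      (fun y _ ↦ (hderiv y).differentiableAt.differentiableWithinAt) fun y hy ↦ ?_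
    rw [interior_Icc] at hy
    have hcos : 0 < cos y := cos_pos_of_mem_Ioo ⟨by linarith [hy.1, pi_pos], hy.2⟩
    have hle : y * cos y ≤ sin y := by
      simpa only [tan_mul_cos hcos.ne'] using
        mul_le_mul_of_nonneg_right (le_tan hy.1.le hy.2) hcos.le
    rw [(hderiv y).deriv]
    exact mul_nonpos_of_nonpos_of_nonneg (by linarith) (exp_pos _).le
  simpa using hanti ⟨le_rfl, by positivity⟩ ⟨hx₀, hx⟩ hx₀

lemma cos_mul_cosh_le_one {x : ℝ} (hx₀ : 0 ≤ x) (hx : x ≤ π / 2) : cos x * cosh x ≤ 1 :=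
  calc cos x * cosh x ≤ cos x * exp (x ^ 2 / 2) :=
        mul_le_mul_of_nonneg_left (cosh_le_exp_half_sq x)
          (cos_nonneg_of_mem_Icc ⟨by linarith [pi_pos], hx⟩)
    _ ≤ 1 := cos_mul_exp_half_sq_le_one hx₀ hx

lemma le_arcosh_inv_cos {x : ℝ} (hx₀ : 0 ≤ x) (hx : x < π / 2) : x ≤ arcosh (cos x)⁻¹ := by
  have hcos : 0 < cos x := cos_pos_of_mem_Ioo ⟨by linarith [pi_pos], hx⟩
  conv_lhs => rw [← arcosh_cosh hx₀]
  rw [arcosh_le_arcosh (cosh_pos x) (inv_pos.2 hcos), ← one_div, le_div_iff₀ hcos, mul_comm]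
  exact cos_mul_cosh_le_one hx₀ hx.le

lemma abs_cos_le_cos {x y : ℝ} (hy : 0 ≤ y) (hyx : y ≤ x) (hxy : x ≤ π - y) :
    |cos x| ≤ cos y := by
  refine abs_le.2 ⟨?_, cos_le_cos_of_nonneg_of_le_pi hy (by linarith) hyx⟩
  have := cos_le_cos_of_nonneg_of_le_pi hy (by linarith) (by linarith : y ≤ π - x)
  rw [cos_pi_sub] at this
  linarith

end Real

namespace Polynomial.Chebyshev

lemma abs_eval_T_real_div_eval_T_real_cosh_le (n : ℕ) {x : ℝ} (hx : |x| ≤ 1) (t : ℝ) :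
    |(T ℝ n).eval x / (T ℝ n).eval (cosh t)| ≤ 2 * exp (-(n * |t|)) := by
  have hcosh : exp (n * |t|) ≤ 2 * cosh (n * t) := by
    rw [← cosh_abs, abs_mul, Nat.abs_cast, cosh_eq]
    linarith [exp_pos (-(n * |t|))]
  rw [T_real_cosh, Int.cast_natCast, abs_div, abs_of_pos (cosh_pos _),
    div_le_iff₀ (cosh_pos _)]
  calc |(T ℝ n).eval x| ≤ 1 := abs_eval_T_real_le_one n hx
    _ = exp (-(n * |t|)) * exp (n * |t|) := by rw [← exp_add, neg_add_cancel, exp_zero]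
    _ ≤ 2 * exp (-(n * |t|)) * cosh (n * t) := by nlinarith [exp_pos (-(n * |t|))]

end Polynomial.Chebyshev

theorem stmt_3_general (L : ℕ) (δ : ℝ) (hδ0 : 0 < δ) (hδ : δ < 1 / 2)
    (F : ℝ → ℂ)
    (hF : ∀ θ : ℝ, F θ = Complex.exp (-Complex.I * π * L * θ) *
      ((((Polynomial.Chebyshev.T ℝ L).eval (Real.cos (π * θ) / Real.cos (π * δ))) /
        ((Polynomial.Chebyshev.T ℝ L).eval (1 / Real.cos (π * δ))) : ℝ) : ℂ)) :
    ∀ θ : ℝ, δ ≤ θ → θ ≤ 1 - δ →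
      ‖F θ‖ ≤ 2 * Real.exp (-(π * L * δ)) := by
  intro θ hθ₁ hθ₂
  have hπδ : π * δ < π / 2 := by nlinarith [pi_pos]
  have hπδ₀ : 0 ≤ π * δ := by positivity
  have hc : 0 < cos (π * δ) := cos_pos_of_mem_Ioo ⟨by linarith, hπδ⟩
  have hx : |cos (π * θ) / cos (π * δ)| ≤ 1 := by
    rw [abs_div, abs_of_pos hc, div_le_one hc]
    exact abs_cos_le_cos hπδ₀ (by nlinarith [pi_pos]) (by nlinarith [pi_pos])
  set t := arcosh (cos (π * δ))⁻¹
  have hcosh : cosh t = 1 / cos (π * δ) := by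
    rw [one_div, cosh_arcosh (one_le_inv₀ hc |>.2 (cos_le_one _))]
  have ht : π * δ ≤ t := le_arcosh_inv_cos hπδ₀ hπδ
  have hphase : ‖Complex.exp (-Complex.I * π * L * θ)‖ = 1 := by simp [Complex.norm_exp]
  rw [hF, norm_mul, hphase, one_mul, Complex.norm_real, norm_eq_abs, ← hcosh]
  calc _ ≤ 2 * exp (-(L * |t|)) := abs_eval_T_real_div_eval_T_real_cosh_le L hx t
    _ ≤ 2 * exp (-(π * L * δ)) := by
      rw [abs_of_nonneg (by linarith)]
      gcongr 2 * exp (-?_)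
      nlinarith [L.cast_nonneg (α := ℝ)]

theorem stmt_3 (L : ℕ) (hL : 1 ≤ L) (δ : ℝ) (hδ0 : 0 < δ) (hδ : δ < 1 / 2)
    (F : ℝ → ℂ)
    (hF : ∀ θ : ℝ, F θ = Complex.exp (-Complex.I * π * L * θ) *
      ((((Polynomial.Chebyshev.T ℝ L).eval (Real.cos (π * θ) / Real.cos (π * δ))) /
        ((Polynomial.Chebyshev.T ℝ L).eval (1 / Real.cos (π * δ))) : ℝ) : ℂ)) :
    ∀ θ : ℝ, δ ≤ θ → θ ≤ 1 - δ →
      ‖F θ‖ ≤ 2 * Real.exp (-(π * L * δ)) :=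
  stmt_3_general L δ hδ0 hδ F hF
end

section
/- Let L be a nonnegative integer and let 0 < x < π/2. Then T_L(1/cos(x)) ≥ (1/2) e^{Lx}. -/
/-!
On `[0, π]` we have `cosh x * cos x ≤ 1`: its derivative `sinh x * cos x - cosh x * sin x`
vanishes at `0` and has derivative `-2 sinh x sin x ≤ 0`. Hence `1 / cos x ≥ cosh x` for
`0 < x < π / 2`. The Chebyshev polynomial `T_L` is monotone on `[1, ∞)`, because there
`T_L (cosh t) = cosh (L t)` with `t ≥ 0`, so
`T_L (1 / cos x) ≥ T_L (cosh x) = cosh (L x) ≥ e^{L x} / 2`.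
-/

open Real Polynomial.Chebyshev Set

theorem Polynomial.Chebyshev.monotoneOn_eval_T_real (n : ℤ) :
    MonotoneOn (fun x => (T ℝ n).eval x) (Ici 1) := by
  intro x (hx : 1 ≤ x) y (hy : 1 ≤ y) hxy
  simp only
  rw [← cosh_arcosh hx, ← cosh_arcosh hy, T_real_cosh, T_real_cosh, cosh_le_cosh, abs_mul,
    abs_mul, abs_of_nonneg (arcosh_nonneg hx), abs_of_nonneg (arcosh_nonneg hy)]
  gcongr
  exact (arcosh_le_arcosh (by linarith) (by linarith)).mpr hxy

theorem Real.sinh_mul_cos_le_cosh_mul_sin {x : ℝ} (hx0 : 0 ≤ x) (hx : x ≤ π) :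
    sinh x * cos x ≤ cosh x * sin x := by
  let g y := cosh y * sin y - sinh y * cos y
  have hg : ∀ y, HasDerivAt g (2 * (sinh y * sin y)) y := fun y => by
    refine (((hasDerivAt_cosh y).mul (hasDerivAt_sin y)).sub
      ((hasDerivAt_sinh y).mul (hasDerivAt_cos y))).congr_deriv ?_
    ring
  have hmono : MonotoneOn g (Icc 0 π) :=
    monotoneOn_of_hasDerivWithinAt_nonneg (convex_Icc 0 π)
      (fun y _ => (hg y).continuousAt.continuousWithinAt) (fun y _ => (hg y).hasDerivWithinAt)
      fun y hy => by
        rw [interior_Icc] at hy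
        have := mul_nonneg (sinh_nonneg_iff.mpr hy.1.le)
          (sin_nonneg_of_nonneg_of_le_pi hy.1.le hy.2.le)
        positivity
  have := hmono ⟨le_rfl, pi_pos.le⟩ ⟨hx0, hx⟩ hx0
  simp only [g, cosh_zero, sin_zero, sinh_zero, cos_zero] at this
  linarith

theorem Real.cosh_mul_cos_le_one {x : ℝ} (hx0 : 0 ≤ x) (hx : x ≤ π) :
    cosh x * cos x ≤ 1 := by
  have hf : ∀ y, HasDerivAt (fun y => cosh y * cos y)
      (sinh y * cos y - cosh y * sin y) y := fun y => by
    refine ((hasDerivAt_cosh y).mul (hasDerivAt_cos y)).congr_deriv ?_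
    ring
  have hanti : AntitoneOn (fun y => cosh y * cos y) (Icc 0 π) :=
    antitoneOn_of_hasDerivWithinAt_nonpos (convex_Icc 0 π)
      (fun y _ => (hf y).continuousAt.continuousWithinAt) (fun y _ => (hf y).hasDerivWithinAt)
      fun y hy => by
        rw [interior_Icc] at hy
        linarith [sinh_mul_cos_le_cosh_mul_sin hy.1.le hy.2.le]
  simpa using hanti ⟨le_rfl, pi_pos.le⟩ ⟨hx0, hx⟩ hx0

theorem stmt_4 (L : ℕ) (x : ℝ) (hx0 : 0 < x) (hx : x < π / 2) :
    (1 / 2) * Real.exp (L * x) ≤ (Polynomial.Chebyshev.T ℝ L).eval (1 / Real.cos x) := by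
  have hcos : 0 < cos x := cos_pos_of_mem_Ioo ⟨by linarith [pi_pos], hx⟩
  have hcosh : cosh x ≤ 1 / cos x := by
    rw [le_div_iff₀ hcos]
    exact cosh_mul_cos_le_one hx0.le (by linarith [pi_pos])
  calc (1 / 2) * exp (L * x) ≤ cosh (L * x) := by
        rw [cosh_eq]
        linarith [exp_pos (-(L * x))]
    _ = (T ℝ L).eval (cosh x) := by
        rw [T_real_cosh, Int.cast_natCast]
    _ ≤ (T ℝ L).eval (1 / cos x) :=
        monotoneOn_eval_T_real L (one_le_cosh x) ((one_le_cosh x).trans hcosh) hcosh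
end

section
/- Let L ≥ 1 be an integer and let f : ℝ → ℂ be a continuous function satisfying: |f(θ)| ≤ 1 for all θ, |f(-θ)| = |f(θ)| for all θ, f(θ + 1) = f(θ) for all θ, and ∫_0^1 |f(θ)|² dθ ≥ 1/(L+1). Then ∫_0^{1/2} |f(θ)|² sin(2πθ)² dθ ≥ 1/(64 L²(L+1)). -/
/-!
Since `|f|²` is even and 1-periodic, `∫_0^{1/2} |f|² ≥ 1/(2(L+1))`. With `ε = 1/(16L)`, the two
edge intervals of `[0, 1/2]` of length `ε` carry at most `2ε ≤ 1/(4(L+1))` of this mass, since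
`|f| ≤ 1`, so the middle interval `[ε, 1/2 - ε]` carries at least `1/(4(L+1))`. There
`sin(2πθ) ≥ 4ε` by Jordan's inequality, which gives the bound `16ε² / (4(L+1)) = 1/(64L²(L+1))`.
-/

open Real MeasureTheory

lemma MeasureTheory.LocallyIntegrable.intervalIntegrable {E : Type*} [NormedAddCommGroup E]
    {g : ℝ → E} (hg : LocallyIntegrable g volume) (a b : ℝ) : IntervalIntegrable g volume a b :=
  (hg.integrableOn_isCompact isCompact_uIcc).intervalIntegrable

lemma Function.Periodic.integral_eq_two_smul_integral_half_of_even {E : Type*}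
    [NormedAddCommGroup E] [NormedSpace ℝ E] {g : ℝ → E} {T : ℝ}
    (hper : Function.Periodic g T) (heven : ∀ x, g (-x) = g x) (hg : LocallyIntegrable g volume) :
    ∫ x in (0:ℝ)..T, g x = (2 : ℝ) • ∫ x in (0:ℝ)..T / 2, g x := by
  have hshift : ∫ x in -(T / 2)..T / 2, g x = ∫ x in (0:ℝ)..T, g x := by
    simpa [show -(T / 2) + T = T / 2 by ring] using hper.intervalIntegral_add_eq (-(T / 2)) 0
  have hreflect : ∫ x in -(T / 2)..0, g x = ∫ x in (0:ℝ)..T / 2, g x := by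
    simpa [heven] using (intervalIntegral.integral_comp_neg (a := 0) (b := T / 2) g).symm
  rw [← hshift, ← intervalIntegral.integral_add_adjacent_intervals (hg.intervalIntegrable _ 0)
    (hg.intervalIntegrable 0 _), hreflect, two_smul]

lemma intervalIntegral.integral_le_integral_shrink_add {g : ℝ → ℝ} (hg : LocallyIntegrable g volume)
    {C : ℝ} (hg_le : ∀ x, ‖g x‖ ≤ C) (a b ε : ℝ) :
    ∫ x in a..b, g x ≤ (∫ x in a + ε..b - ε, g x) + 2 * C * |ε| := by
  have hedge : ∀ c d, ∫ x in c..d, g x ≤ C * |d - c| := fun c d =>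
    (le_norm_self _).trans <| by
      simpa using intervalIntegral.norm_integral_le_of_norm_le_const (fun x _ => hg_le x)
  have hleft := hedge a (a + ε)
  have hright := hedge (b - ε) b
  rw [add_sub_cancel_left] at hleft
  rw [sub_sub_cancel] at hright
  rw [← intervalIntegral.integral_add_adjacent_intervals (hg.intervalIntegrable a (a + ε))
    (hg.intervalIntegrable _ b), ← intervalIntegral.integral_add_adjacent_intervals
    (hg.intervalIntegrable (a + ε) (b - ε)) (hg.intervalIntegrable _ b)]
  linarith

lemma intervalIntegral.const_mul_integral_le_integral_mul {g w : ℝ → ℝ} {a b c : ℝ}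
    (hab : a ≤ b) (hg : IntervalIntegrable g volume a b)
    (hgw : IntervalIntegrable (fun x => g x * w x) volume a b)
    (hg_nonneg : ∀ x ∈ Set.Icc a b, 0 ≤ g x) (hw : ∀ x ∈ Set.Icc a b, c ≤ w x) :
    c * ∫ x in a..b, g x ≤ ∫ x in a..b, g x * w x := by
  rw [← intervalIntegral.integral_const_mul]
  refine intervalIntegral.integral_mono_on hab (hg.const_mul c) hgw fun x hx => ?_
  rw [mul_comm]
  exact mul_le_mul_of_nonneg_left (hw x hx) (hg_nonneg x hx)

lemma Real.four_mul_min_le_sin_two_pi_mul {θ : ℝ} (h₀ : 0 ≤ θ) (h₁ : θ ≤ 1 / 2) :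
    4 * min θ (1 / 2 - θ) ≤ sin (2 * π * θ) := by
  rcases le_total θ (1 / 4) with h | h
  · have := mul_le_sin (x := 2 * π * θ) (by positivity) (by nlinarith [pi_pos])
    rw [show 2 / π * (2 * π * θ) = 4 * θ by field_simp; ring] at this
    linarith [min_le_left θ (1 / 2 - θ)]
  · have := mul_le_sin (x := π - 2 * π * θ) (by nlinarith [pi_pos]) (by nlinarith [pi_pos])
    rw [show 2 / π * (π - 2 * π * θ) = 4 * (1 / 2 - θ) by field_simp; ring, sin_pi_sub] at this
    linarith [min_le_right θ (1 / 2 - θ)]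

theorem stmt_8 (L : ℕ) (hL : 1 ≤ L) (f : ℝ → ℂ) (hcont : Continuous f)
    (hbound : ∀ θ : ℝ, ‖f θ‖ ≤ 1)
    (heven : ∀ θ : ℝ, ‖f (-θ)‖ = ‖f θ‖)
    (hper : ∀ θ : ℝ, f (θ + 1) = f θ)
    (hL2 : 1 / (L + 1) ≤ ∫ θ in (0:ℝ)..1, ‖f θ‖ ^ 2) :
    1 / (64 * L ^ 2 * (L + 1)) ≤
      ∫ θ in (0:ℝ)..(1 / 2), ‖f θ‖ ^ 2 * Real.sin (2 * π * θ) ^ 2 := by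
  set g : ℝ → ℝ := fun θ => ‖f θ‖ ^ 2
  set ε : ℝ := 1 / (16 * L)
  have hL' : (1 : ℝ) ≤ L := by exact_mod_cast hL
  have hε : 0 < ε := by positivity
  have hε_le : ε ≤ 1 / 16 := by
    rw [div_le_div_iff₀ (by positivity) (by norm_num)]; linarith
  have hgcont : Continuous g := (continuous_norm.comp hcont).pow 2
  have hwcont : Continuous fun θ => g θ * sin (2 * π * θ) ^ 2 := by fun_prop
  have hhalf := Function.Periodic.integral_eq_two_smul_integral_half_of_even (T := 1)
    (fun θ => by simp [g, hper θ]) (fun θ => by simp [g, heven θ]) hgcont.locallyIntegrable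
  have hmid := intervalIntegral.integral_le_integral_shrink_add (C := 1) hgcont.locallyIntegrable
    (fun θ => by simpa [g] using hbound θ) 0 (1 / 2) ε
  have hweight := intervalIntegral.const_mul_integral_le_integral_mul (c := 16 * ε ^ 2)
    (by linarith : ε ≤ 1 / 2 - ε) (hgcont.intervalIntegrable _ _) (hwcont.intervalIntegrable _ _)
    (fun θ _ => sq_nonneg _) fun θ ⟨h₀, h₁⟩ => by
      have := four_mul_min_le_sin_two_pi_mul (by linarith) (by linarith : θ ≤ 1 / 2)
      nlinarith [le_min h₀ (by linarith : ε ≤ 1 / 2 - θ)]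
  have hsub : ∫ θ in ε..1 / 2 - ε, g θ * sin (2 * π * θ) ^ 2 ≤
      ∫ θ in (0:ℝ)..1 / 2, g θ * sin (2 * π * θ) ^ 2 :=
    intervalIntegral.integral_mono_interval hε.le (by linarith) (by linarith)
      (Filter.Eventually.of_forall fun θ => by positivity) (hwcont.intervalIntegrable _ _)
  rw [zero_add, mul_one, abs_of_pos hε] at hmid
  have hmass : 1 / (4 * (L + 1)) ≤ ∫ θ in ε..1 / 2 - ε, g θ := by
    have h2ε : 2 * ε ≤ 1 / (4 * (L + 1)) := by
      rw [show 2 * ε = 1 / (8 * L) by simp only [ε]; ring,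
        div_le_div_iff₀ (by positivity) (by positivity)]
      linarith
    have : (1 : ℝ) / (L + 1) = 4 * (1 / (4 * (L + 1))) := by field_simp
    linarith [hL2.trans_eq (hhalf.trans (smul_eq_mul _ _))]
  calc (1 : ℝ) / (64 * L ^ 2 * (L + 1)) = 16 * ε ^ 2 * (1 / (4 * (L + 1))) := by
        simp only [ε]; field_simp; ring
    _ ≤ 16 * ε ^ 2 * ∫ θ in ε..1 / 2 - ε, g θ := by gcongr
    _ ≤ _ := hweight.trans hsub
end

section
/- Let L ≥ 1 be an integer and let 0 < δ < 1/2. Define F : ℝ → ℂ by F(θ) = e^{-iπLθ} · T_L(cos(πθ)/cos(πδ)) / T_L(1/cos(πδ)). Then ∫_0^1 |F(θ)|² dθ ≥ 1/(L+1) and ∫_0^{1/2} |F(θ)|² sin(2πθ)² dθ ≥ 1/(64 L²(L+1)). -/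
/-!
Let `c = cos (πδ)` and `w = exp (it)`. Since `cos t / c = c⁻¹ (w + w⁻¹) / 2`, the Chebyshev
recursion shows that `w ^ L * T_L (cos t / c)` is a polynomial of degree `L` in `w²`. Hence
`|F θ| = |P z|` with `z = exp (2πiθ)`, for a polynomial `P` of degree at most `L` with `P 1 = 1`.
By Parseval, `∫₀¹ |F|²` is the sum of the squared moduli of the coefficients of `P`, and
Cauchy–Schwarz against `P 1 = ∑ pₖ` gives the first bound. For the second, `|F θ sin 2πθ| = |R z|`
with `R = P (1 - X²) / 2` of degree at most `L + 2` and `R' 1 = ∑ k rₖ = -1`, so Cauchy–Schwarz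
again bounds `∫₀¹ |R z|²` from below; the integrand is symmetric under `θ ↦ 1 - θ`, so the
integral over `[0, 1/2]` is half of it.
-/

open Real MeasureTheory

-- `z ^ n * T_n (a (z + z⁻¹) / 2)` written as a polynomial in `z²`, see `joukowskiT.eval_sq`.
open Polynomial in
noncomputable def joukowskiT {K : Type*} [Field K] (a : K) : ℕ → K[X]
  | 0 => 1
  | 1 => C (a / 2) * (1 + X)
  | n + 2 => C a * (1 + X) * joukowskiT a (n + 1) - X * joukowskiT a n

namespace joukowskiT

open Polynomial

variable {K : Type*} [Field K] (a : K)

theorem eval_sq [NeZero (2 : K)] {z : K} (hz : z ≠ 0) : ∀ n : ℕ,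
    z ^ n * (Chebyshev.T K n).eval (a * (z + z⁻¹) / 2) = (joukowskiT a n).eval (z ^ 2)
  | 0 => by simp [joukowskiT]
  | 1 => by
    simp only [joukowskiT, pow_one, Nat.cast_one, Chebyshev.T_one, eval_X, eval_mul, eval_C,
      eval_add, eval_one]
    field_simp
    ring
  | n + 2 => by
    simp only [joukowskiT, eval_sub, eval_mul, eval_C, eval_add, eval_one, eval_X,
      ← eval_sq hz (n + 1), ← eval_sq hz n]
    push_cast
    rw [Chebyshev.T_add_two]
    simp only [eval_sub, eval_mul, eval_ofNat, eval_X]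
    field_simp
    ring

theorem eval_one [NeZero (2 : K)] (n : ℕ) :
    (joukowskiT a n).eval 1 = (Chebyshev.T K n).eval a := by
  simpa [mul_div_assoc] using (eval_sq a one_ne_zero n).symm

theorem natDegree_le : ∀ n : ℕ, (joukowskiT a n).natDegree ≤ n
  | 0 => by simp [joukowskiT]
  | 1 => by simp only [joukowskiT]; compute_degree
  | n + 2 => by
    refine (natDegree_sub_le_of_le (natDegree_mul_le_of_le (m := 1) ?_ (natDegree_le (n + 1)))
      (natDegree_mul_le_of_le (m := 1) natDegree_X_le (natDegree_le n))).trans ?_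
    · compute_degree
    · omega

end joukowskiT

namespace Polynomial.Chebyshev

theorem abs_eval_T_real_mul_cos (a t : ℝ) (n : ℕ) :
    |(T ℝ n).eval (a * cos t)| = ‖(joukowskiT (a : ℂ) n).eval (circleMap 0 1 (2 * t))‖ := by
  have hz : Complex.exp (t * Complex.I) ≠ 0 := Complex.exp_ne_zero _
  have hcos : (a : ℂ) * (Complex.exp (t * Complex.I) + (Complex.exp (t * Complex.I))⁻¹) / 2 =
      ((a * cos t : ℝ) : ℂ) := by
    rw [← Complex.exp_neg, ← neg_mul, Complex.ofReal_mul, Complex.ofReal_cos, ← Complex.two_cos]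
    ring
  have hsq : circleMap 0 1 (2 * t) = Complex.exp (t * Complex.I) ^ 2 := by
    rw [circleMap_zero, ← Complex.exp_nat_mul]
    push_cast
    ring_nf
  rw [hsq, ← joukowskiT.eval_sq _ hz, hcos, ← complex_ofReal_eval_T, norm_mul, norm_pow,
    Complex.norm_exp_ofReal_mul_I, one_pow, one_mul, Complex.norm_real, Real.norm_eq_abs]

theorem abs_eval_T_real_neg (n : ℤ) (x : ℝ) : |(T ℝ n).eval (-x)| = |(T ℝ n).eval x| := by
  rw [T_eval_neg, abs_mul, Int.coe_negOnePow, abs_pow, abs_neg, abs_one, one_pow, one_mul]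

theorem exists_abs_eval_T_ratio_eq_norm_eval_circleMap (n : ℕ) {c : ℝ} (hc : 0 < c)
    (hc1 : c ≤ 1) : ∃ p : ℂ[X], p.natDegree ≤ n ∧ p.eval 1 = 1 ∧ ∀ θ : ℝ,
      |(T ℝ n).eval (cos (π * θ) / c) / (T ℝ n).eval (1 / c)| =
        ‖p.eval (circleMap 0 1 (2 * π * θ))‖ := by
  set M := (T ℝ n).eval (1 / c)
  have hM : 0 < M := one_pos.trans_le (one_le_eval_T_real n ((one_le_div hc).2 hc1))
  refine ⟨Polynomial.C ((M : ℂ)⁻¹) * joukowskiT ((1 / c : ℝ) : ℂ) n,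
    (natDegree_C_mul_le _ _).trans (joukowskiT.natDegree_le _ n), ?_, fun θ => ?_⟩
  · rw [eval_mul, eval_C, joukowskiT.eval_one, ← complex_ofReal_eval_T]
    exact inv_mul_cancel₀ (by exact_mod_cast hM.ne')
  · rw [eval_mul, eval_C, norm_mul, norm_inv, Complex.norm_real, Real.norm_eq_abs, mul_assoc,
      ← abs_eval_T_real_mul_cos, one_div_mul_eq_div, abs_div, inv_mul_eq_div]

end Polynomial.Chebyshev

theorem norm_sum_mul_sq_le {ι R : Type*} [SeminormedRing R] (s : Finset ι) (w f : ι → R) :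
    ‖∑ i ∈ s, w i * f i‖ ^ 2 ≤ (∑ i ∈ s, ‖w i‖ ^ 2) * ∑ i ∈ s, ‖f i‖ ^ 2 :=
  calc ‖∑ i ∈ s, w i * f i‖ ^ 2 ≤ (∑ i ∈ s, ‖w i‖ * ‖f i‖) ^ 2 := by
        gcongr
        exact (norm_sum_le _ _).trans (Finset.sum_le_sum fun i _ => norm_mul_le _ _)
    _ ≤ _ := Finset.sum_mul_sq_le_sq_mul_sq _ _ _

theorem integral_comp_circleMap_two_pi_mul {E : Type*} [NormedAddCommGroup E] [NormedSpace ℝ E]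
    (f : ℂ → E) (c : ℂ) (R : ℝ) :
    ∫ θ in (0 : ℝ)..1, f (circleMap c R (2 * π * θ)) = circleAverage f c R := by
  rw [intervalIntegral.integral_comp_mul_left (fun t => f (circleMap c R t)) (by positivity),
    circleAverage_def]
  simp

theorem norm_one_sub_circleMap_sq (t : ℝ) : ‖1 - circleMap 0 1 t ^ 2‖ = 2 * |sin t| := by
  have h : 1 - circleMap 0 1 t ^ 2 = circleMap 0 1 t * (-2 * Complex.I * Complex.sin t) := by
    rw [circleMap_zero, Complex.ofReal_one, one_mul, Complex.sin, neg_mul (t : ℂ), Complex.exp_neg]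
    field_simp
    ring_nf
    rw [Complex.I_sq]
    ring
  rw [h, norm_mul, norm_circleMap_zero, ← Complex.ofReal_sin, norm_mul, Complex.norm_real]
  simp

namespace Polynomial

theorem card_support_le_natDegree_add_one {R : Type*} [Semiring R] (p : R[X]) :
    p.support.card ≤ p.natDegree + 1 := by
  simpa using Finset.card_le_card (supp_subset_range (Nat.lt_succ_self p.natDegree))

theorem norm_eval_one_sq_le_circleAverage {p : ℂ[X]} {n : ℕ} (hp : p.natDegree ≤ n) :
    ‖p.eval 1‖ ^ 2 ≤ (n + 1) * circleAverage (fun z ↦ ‖p.eval z‖ ^ 2) 0 1 := by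
  rw [← sum_sq_norm_coeff_eq_circleAverage, eval_eq_sum, sum_def]
  have := norm_sum_mul_sq_le p.support (fun _ => (1 : ℂ)) p.coeff
  simp only [one_pow, one_mul, norm_one, Finset.sum_const, nsmul_eq_mul, mul_one] at this ⊢
  refine this.trans (mul_le_mul_of_nonneg_right ?_ (Finset.sum_nonneg fun _ _ => by positivity))
  exact_mod_cast (card_support_le_natDegree_add_one p).trans (by omega)

theorem norm_derivative_eval_one_sq_le_circleAverage {p : ℂ[X]} {n : ℕ} (hp : p.natDegree ≤ n) :
    ‖p.derivative.eval 1‖ ^ 2 ≤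
      (n + 1) * n ^ 2 * circleAverage (fun z ↦ ‖p.eval z‖ ^ 2) 0 1 := by
  rw [← sum_sq_norm_coeff_eq_circleAverage, derivative_eval, sum_def]
  have := norm_sum_mul_sq_le p.support (fun i => (i : ℂ)) p.coeff
  simp only [one_pow, mul_one, mul_comm _ (p.coeff _)] at this ⊢
  refine this.trans (mul_le_mul_of_nonneg_right ?_ (Finset.sum_nonneg fun _ _ => by positivity))
  calc ∑ i ∈ p.support, ‖(i : ℂ)‖ ^ 2 ≤ ∑ i ∈ p.support, (n : ℝ) ^ 2 := by
        refine Finset.sum_le_sum fun i hi => ?_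
        rw [Complex.norm_natCast]
        gcongr
        exact_mod_cast (le_natDegree_of_mem_supp i hi).trans hp
    _ ≤ (n + 1) * n ^ 2 := by
        rw [Finset.sum_const, nsmul_eq_mul]
        gcongr
        exact_mod_cast (card_support_le_natDegree_add_one p).trans (by omega)

theorem norm_eval_one_sq_le_integral {p : ℂ[X]} {n : ℕ} (hp : p.natDegree ≤ n) :
    ‖p.eval 1‖ ^ 2 ≤ (n + 1) * ∫ θ in (0 : ℝ)..1, ‖p.eval (circleMap 0 1 (2 * π * θ))‖ ^ 2 :=
  (norm_eval_one_sq_le_circleAverage hp).trans_eq (by rw [← integral_comp_circleMap_two_pi_mul])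

theorem norm_eval_one_sq_le_integral_mul_sin_sq {p : ℂ[X]} {n : ℕ} (hp : p.natDegree ≤ n) :
    ‖p.eval 1‖ ^ 2 ≤ (n + 3) * (n + 2) ^ 2 *
      ∫ θ in (0 : ℝ)..1, ‖p.eval (circleMap 0 1 (2 * π * θ))‖ ^ 2 * sin (2 * π * θ) ^ 2 := by
  set r : ℂ[X] := C (1 / 2 : ℂ) * (1 - X ^ 2) * p
  have hr : r.natDegree ≤ n + 2 :=
    (natDegree_mul_le_of_le (by compute_degree) hp).trans (by omega)
  have hr1 : r.derivative.eval 1 = -p.eval 1 := by simp [r, one_add_one_eq_two]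
  have hnorm : ∀ θ : ℝ, ‖p.eval (circleMap 0 1 (2 * π * θ))‖ ^ 2 * sin (2 * π * θ) ^ 2 =
      ‖r.eval (circleMap 0 1 (2 * π * θ))‖ ^ 2 := fun θ => by
    rw [eval_mul, eval_mul, eval_C, eval_sub, eval_one, eval_pow, eval_X, norm_mul, norm_mul,
      norm_one_sub_circleMap_sq, one_div, norm_inv, Complex.norm_ofNat,
      inv_mul_cancel_left₀ two_ne_zero, mul_pow, sq_abs, mul_comm]
  have h := norm_derivative_eval_one_sq_le_circleAverage hr
  rw [hr1, norm_neg, ← integral_comp_circleMap_two_pi_mul] at h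
  simp_rw [hnorm]
  convert h using 2
  push_cast
  ring

end Polynomial

theorem intervalIntegral.integral_left_half_of_symmetric {g : ℝ → ℝ} {a b : ℝ}
    (hg : IntervalIntegrable g volume a b) (hsymm : ∀ x, g (a + b - x) = g x) :
    ∫ x in a..(a + b) / 2, g x = (1 / 2) * ∫ x in a..b, g x := by
  have hm : (a + b) / 2 ∈ Set.uIcc a b := by
    rcases le_total a b with h | h
    · exact Set.mem_uIcc_of_le (by linarith) (by linarith)
    · exact Set.mem_uIcc_of_ge (by linarith) (by linarith)
  set m := (a + b) / 2
  have hright : ∫ x in m..b, g x = ∫ x in a..m, g x :=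
    calc ∫ x in m..b, g x = ∫ x in m..b, g (a + b - x) := by simp only [hsymm]
      _ = ∫ x in a..m, g x := by
        rw [intervalIntegral.integral_comp_sub_left, add_sub_cancel_right]
        congr 1
        ring
  rw [← intervalIntegral.integral_add_adjacent_intervals
    (hg.mono_set (Set.uIcc_subset_uIcc_left hm)) (hg.mono_set (Set.uIcc_subset_uIcc_right hm)),
    hright]
  ring

theorem stmt_15 (L : ℕ) (hL : 1 ≤ L) (δ : ℝ) (hδ0 : 0 < δ) (hδ : δ < 1 / 2)
    (F : ℝ → ℂ)
    (hF : ∀ θ : ℝ, F θ = Complex.exp (-Complex.I * π * L * θ) *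
      ((((Polynomial.Chebyshev.T ℝ L).eval (Real.cos (π * θ) / Real.cos (π * δ))) /
        ((Polynomial.Chebyshev.T ℝ L).eval (1 / Real.cos (π * δ))) : ℝ) : ℂ)) :
    (1 / (L + 1) ≤ ∫ θ in (0:ℝ)..1, ‖F θ‖ ^ 2) ∧
    (1 / (64 * L ^ 2 * (L + 1)) ≤
      ∫ θ in (0:ℝ)..(1 / 2), ‖F θ‖ ^ 2 * Real.sin (2 * π * θ) ^ 2) := by
  have hc : 0 < cos (π * δ) := cos_pos_of_mem_Ioo ⟨by nlinarith [pi_pos], by nlinarith [pi_pos]⟩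
  have hnormF : ∀ θ, ‖F θ‖ = |(Polynomial.Chebyshev.T ℝ L).eval (cos (π * θ) / cos (π * δ)) /
      (Polynomial.Chebyshev.T ℝ L).eval (1 / cos (π * δ))| := fun θ => by
    rw [hF, norm_mul, Complex.norm_exp, Complex.norm_real, Real.norm_eq_abs]
    simp
  obtain ⟨P, hPdeg, hP1, hP⟩ :=
    Polynomial.Chebyshev.exists_abs_eval_T_ratio_eq_norm_eval_circleMap L hc (cos_le_one _)
  have hsymm : ∀ θ, ‖F (0 + 1 - θ)‖ ^ 2 * sin (2 * π * (0 + 1 - θ)) ^ 2 =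
      ‖F θ‖ ^ 2 * sin (2 * π * θ) ^ 2 := fun θ => by
    rw [zero_add, hnormF, hnormF, mul_one_sub, cos_pi_sub, neg_div, abs_div, abs_div,
      Polynomial.Chebyshev.abs_eval_T_real_neg, mul_one_sub, sin_two_pi_sub, neg_sq]
  simp_rw [hnormF, hP] at hsymm ⊢
  constructor
  · have h := Polynomial.norm_eval_one_sq_le_integral hPdeg
    rw [hP1, norm_one, one_pow] at h
    rw [div_le_iff₀ (by positivity)]
    linarith
  · have h := Polynomial.norm_eval_one_sq_le_integral_mul_sin_sq hPdeg
    rw [hP1, norm_one, one_pow] at h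
    have hhalf := intervalIntegral.integral_left_half_of_symmetric
      (g := fun θ => ‖P.eval (circleMap 0 1 (2 * π * θ))‖ ^ 2 * sin (2 * π * θ) ^ 2)
      (Continuous.intervalIntegrable (by fun_prop) 0 1) hsymm
    simp only [zero_add] at hhalf
    rw [hhalf, div_le_iff₀ (by positivity)]
    have hA := pos_of_mul_pos_right (one_pos.trans_le h) (by positivity)
    have hL' : (1 : ℝ) ≤ L := by exact_mod_cast hL
    have hpoly : ((L : ℝ) + 3) * (L + 2) ^ 2 ≤ 32 * L ^ 2 * (L + 1) := by nlinarith
    nlinarith [mul_le_mul_of_nonneg_right hpoly hA.le]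
end
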